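/- The truncated-MBRW increment variances satisfy: (i) ρ_{N,k₀}(x,y) is nonincreasing in k₀ for each fixed N and x,y ∈ V_N; and (ii) limsup_{k₀→∞} limsup_{N→∞} sup{ρ_{N,k₀}(x,y) : x,y ∈ V_N, d^N(x,y) ≤ 2^{√k₀}} = 0. -/

import Mathlib

open MeasureTheory ProbabilityTheory
open scoped ENNReal NNReal Classical

noncomputable section

/-- The box `V_N = ([0,N-1] ∩ ℤ)²`. -/
def V (N : ℕ) : Finset (ℤ × ℤ) :=
  Finset.Icc 0 ((N : ℤ) - 1) ×ˢ Finset.Icc 0 ((N : ℤ) - 1)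

/-- The interior `V_N° = ((0,N-1) ∩ ℤ)²`. -/
def Vint (N : ℕ) : Finset (ℤ × ℤ) :=
  Finset.Ioo 0 ((N : ℤ) - 1) ×ˢ Finset.Ioo 0 ((N : ℤ) - 1)

/-- The maximum of `f` over a finite set (`0` for the empty set). -/
def fmax (s : Finset (ℤ × ℤ)) (f : ℤ × ℤ → ℝ) : ℝ :=
  if h : s.Nonempty then s.sup' h f else 0

/-- The four nearest-neighbour steps of simple random walk on ℤ². -/
def nbrs : Finset (ℤ × ℤ) := {(1, 0), (-1, 0), (0, 1), (0, -1)}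

/-- `killedKernel N m x y = P^x(w_j ∈ V_N° for all j < m, and w_m = y)`, the m-step
transition function of simple random walk killed upon leaving `V_N°`. -/
def killedKernel (N : ℕ) : ℕ → ℤ × ℤ → ℤ × ℤ → ℝ
  | 0, x, y => if x = y then 1 else 0
  | m + 1, x, y =>
      if x ∈ Vint N then (1 / 4 : ℝ) * ∑ d ∈ nbrs, killedKernel N m (x + d) y else 0

/-- The Green function `G_N(x,y) = E^x[∑_{m=0}^τ 1_{w_m = y}]`, with `G_N(x,·) = 0`
for `x ∈ ∂V_N`. -/
def greenFn (N : ℕ) (x y : ℤ × ℤ) : ℝ :=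
  if x ∈ Vint N then ∑' m : ℕ, killedKernel N m x y else 0

/-- `x ∼_N y`, i.e. `x - y ∈ (Nℤ)²`. -/
def simRel (N : ℕ) (x y : ℤ × ℤ) : Prop :=
  (N : ℤ) ∣ (x.1 - y.1) ∧ (N : ℤ) ∣ (x.2 - y.2)

/-- `torusKernel N m x y = P^x(w_m ∼_N y)` for simple random walk on ℤ². -/
def torusKernel (N : ℕ) : ℕ → ℤ × ℤ → ℤ × ℤ → ℝ
  | 0, x, y => if simRel N x y then 1 else 0
  | m + 1, x, y => (1 / 4 : ℝ) * ∑ d ∈ nbrs, torusKernel N m (x + d) y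

/-- The torus Green function `Ḡ_N(x,y) = E^x[∑_{m=0}^{τ'} 1_{w_m ∼_N y}]`, where `τ'` is
an independent exponential time of parameter `1/N²` (so `P(τ' ≥ m) = exp(-m/N²)`). -/
def torusGreen (N : ℕ) (x y : ℤ × ℤ) : ℝ :=
  ∑' m : ℕ, Real.exp (-(m : ℝ) / (N : ℝ) ^ 2) * torusKernel N m x y

/-- Euclidean norm on ℤ². -/
def euclNorm (v : ℤ × ℤ) : ℝ := Real.sqrt ((v.1 : ℝ) ^ 2 + (v.2 : ℝ) ^ 2)

/-- ℓ∞ norm on ℤ². -/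
def supNorm (v : ℤ × ℤ) : ℝ := max |(v.1 : ℝ)| |(v.2 : ℝ)|

/-- Torus (euclidean) distance `d^N(x,y) = min{‖x-z‖ : z ∼_N y}`. -/
def dN (N : ℕ) (x y : ℤ × ℤ) : ℝ :=
  sInf {r : ℝ | ∃ z : ℤ × ℤ, simRel N z y ∧ r = euclNorm (x - z)}

/-- Torus ℓ∞ distance `d_∞^N(x,y) = min{‖x-z‖_∞ : z ∼_N y}`. -/
def dNinf (N : ℕ) (x y : ℤ × ℤ) : ℝ :=
  sInf {r : ℝ | ∃ z : ℤ × ℤ, simRel N z y ∧ r = supNorm (x - z)}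

/-- `{X_x}_{x ∈ s}` is a centered Gaussian field with covariance `G` on `s`: every finite
linear combination of the `X_x`, `x ∈ s`, is a centered Gaussian variable, and the
covariances on `s` are given by `G`. -/
def IsCenteredGaussianFieldOn {Ω : Type} [MeasurableSpace Ω] (P : Measure Ω)
    (X : ℤ × ℤ → Ω → ℝ) (s : Finset (ℤ × ℤ)) (G : ℤ × ℤ → ℤ × ℤ → ℝ) : Prop :=
  (∀ x ∈ s, Measurable (X x)) ∧
  (∀ t : Finset (ℤ × ℤ), t ⊆ s → ∀ c : ℤ × ℤ → ℝ, ∃ v : ℝ≥0,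
      Measure.map (fun ω => ∑ i ∈ t, c i * X i ω) P = gaussianReal 0 v) ∧
  ∀ x ∈ s, ∀ y ∈ s, ∫ ω, X x ω * X y ω ∂P = G x y

/-- The lower-left corners of the squares of side `2^k` (elements of `B_k`) containing `z`. -/
def corners (k : ℕ) (z : ℤ × ℤ) : Finset (ℤ × ℤ) :=
  Finset.Icc (z - ((2 : ℤ) ^ k - 1, (2 : ℤ) ^ k - 1)) z

/-- Reduction of a corner modulo `N`, identifying a square of `B_k` with the unique
`B' ∈ B_k^N` with `B ∼_N B'`. -/
def modN (N : ℕ) (v : ℤ × ℤ) : ℤ × ℤ := (v.1 % (N : ℤ), v.2 % (N : ℤ))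

/-- Partial sums of the MBRW: `∑_{k=lo}^{hi} ∑_{B ∈ B_k(z)} b_{k,B}^N`, where a square is
identified with its lower-left corner and `b^N_{k,B} = b_{k,B'}` for `B ∼_N B' ∈ B_k^N`.
In particular `mbrwSum N 0 n b = S^N`, `mbrwSum N k₀ n b = S^{N,k₀}` and
`mbrwSum N (n-j) n b = S^N(j)`. -/
def mbrwSum {Ω : Type} (N lo hi : ℕ) (b : ℕ → ℤ × ℤ → Ω → ℝ) (z : ℤ × ℤ) (ω : Ω) : ℝ :=
  ∑ k ∈ Finset.Icc lo hi, ∑ v ∈ corners k z, b k (modN N v) ω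

/-- `{b_{k,B}}_{0 ≤ k ≤ n, B ∈ B_k^N}` (squares identified with their lower-left corners,
which lie in `V_N`) is a family of independent centered Gaussian variables of variance
`2^{-2k}`: the family is jointly Gaussian and the covariances are
`E[b_{k,v} b_{k',v'}] = 2^{-2k} 1_{(k,v) = (k',v')}`. -/
def IsMBRWBase {Ω : Type} [MeasurableSpace Ω] (P : Measure Ω) (N n : ℕ)
    (b : ℕ → ℤ × ℤ → Ω → ℝ) : Prop :=
  (∀ k ≤ n, ∀ v ∈ V N, Measurable (b k v)) ∧
  (∀ t : Finset (ℕ × (ℤ × ℤ)), (∀ p ∈ t, p.1 ≤ n ∧ p.2 ∈ V N) →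
      ∀ c : ℕ × (ℤ × ℤ) → ℝ, ∃ v : ℝ≥0,
      Measure.map (fun ω => ∑ p ∈ t, c p * b p.1 p.2 ω) P = gaussianReal 0 v) ∧
  ∀ k k' : ℕ, ∀ v v' : ℤ × ℤ, k ≤ n → k' ≤ n → v ∈ V N → v' ∈ V N →
    ∫ ω, b k v ω * b k' v' ω ∂P = if k = k' ∧ v = v' then ((2 : ℝ) ^ (2 * k))⁻¹ else 0

/-- `V_N' = V_{N/2} + (N/4, N/4)`. -/
def V' (N : ℕ) : Finset (ℤ × ℤ) :=
  (V (N / 2)).image fun z => z + (((N / 4 : ℕ) : ℤ), ((N / 4 : ℕ) : ℤ))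

/-- `A_n = 2√(log 2)·n − (3/(4√(log 2)))·log n`. -/
def An (n : ℕ) : ℝ :=
  2 * Real.sqrt (Real.log 2) * n - 3 / (4 * Real.sqrt (Real.log 2)) * Real.log n

/-- The barrier `L_n(j)`: `L_n(0) = L_n(n) = 0`, `L_n(j) = c₅ log j` for `1 ≤ j ≤ ⌊n/2⌋`
and `L_n(j) = c₅ log (n-j)` for `⌊n/2⌋ < j ≤ n-1`. -/
def Lfun (c₅ : ℝ) (n j : ℕ) : ℝ :=
  if j = 0 ∨ j = n then 0
  else if j ≤ n / 2 then c₅ * Real.log j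
  else c₅ * Real.log ((n - j : ℕ) : ℝ)

open Finset Filter Topology
open scoped symmDiff

/-!
Reducing corners mod `N`, `S_x^{N,k₀} - S_y^{N,k₀}` is a combination of the independent
`b_{k,w}` with coefficients `1_{w ∈ A_k(x)} - 1_{w ∈ A_k(y)}`, where `A_k(z)` is the set of
squares of `B_k^N` containing `z` on the torus. Hence
`ρ_{N,k₀}(x,y) = ∑_{k=k₀}^n |A_k(x) ∆ A_k(y)| 4^{-k}`, a sum of nonnegative terms, which gives (i).
Two squares of side `2^k` at offset `(a,b)` share at least `(2^k-|a|)₊(2^k-|b|)₊` cells, so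
`|A_k(x) ∆ A_k(y)| ≤ 2^{k+1}(|a|+|b|)`; summing over `k ≥ k₀` gives
`ρ_{N,k₀}(x,y) ≤ 8·2^{-k₀} d^N(x,y)`, and `2^{√k₀ - k₀} → 0` gives (ii).
-/

lemma Nat.mul_self_le_mul_add_add_tsub_mul_tsub (L a b : ℕ) :
    L * L ≤ L * (a + b) + (L - a) * (L - b) := by
  have : L ≤ (L - a) + a := by omega
  have : L ≤ (L - b) + b := by omega
  have : L - b ≤ L := by omega
  nlinarith

lemma card_symmDiff_add_two_mul_card_inter {α : Type*} [DecidableEq α] (s t : Finset α) :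
    #(s ∆ t) + 2 * #(s ∩ t) = #s + #t := by
  rw [Finset.symmDiff_def, card_union_of_disjoint disjoint_sdiff_sdiff]
  have := card_sdiff_add_card_inter s t
  have := card_sdiff_add_card_inter t s
  rw [inter_comm t s] at this
  omega

lemma sum_sq_ite_mem_sub_ite_mem {α : Type*} [DecidableEq α] {s A B : Finset α} (hA : A ⊆ s)
    (hB : B ⊆ s) :
    ∑ w ∈ s, ((if w ∈ A then 1 else 0) - (if w ∈ B then 1 else 0) : ℝ) ^ 2 = #(A ∆ B) := by
  have hpt : ∀ w, ((if w ∈ A then 1 else 0) - (if w ∈ B then 1 else 0) : ℝ) ^ 2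
      = if w ∈ A ∆ B then 1 else 0 := by
    intro w
    by_cases hwA : w ∈ A <;> by_cases hwB : w ∈ B <;> simp [mem_symmDiff, hwA, hwB]
  simp only [hpt, sum_boole, filter_mem_eq_inter,
    inter_eq_right.mpr (symmDiff_subset_union.trans (union_subset hA hB))]

lemma sum_Icc_inv_two_pow_le (k₀ n : ℕ) : ∑ k ∈ Icc k₀ n, (2⁻¹ : ℝ) ^ k ≤ 2 * 2⁻¹ ^ k₀ := by
  rw [← Ico_add_one_right_eq_Icc, sum_Ico_eq_sum_range]
  simp only [pow_add, ← mul_sum]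
  rw [mul_comm]
  gcongr
  simpa using sum_geometric_two_le (n + 1 - k₀)

lemma tendsto_sqrt_sub_self_atBot : Tendsto (fun x : ℝ => √x - x) atTop atBot := by
  refine tendsto_atBot.mpr fun c => ?_
  filter_upwards [eventually_ge_atTop (max 0 (1 - 2 * c))] with x hx
  have hx0 : 0 ≤ x := le_of_max_le_left hx
  have hxc : 1 - 2 * c ≤ x := le_of_max_le_right hx
  -- `√x ≤ (x + 1) / 2` by AM-GM
  nlinarith [Real.sq_sqrt hx0, sq_nonneg (√x - 1)]

lemma tendsto_inv_two_pow_mul_two_rpow_sqrt :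
    Tendsto (fun k : ℕ => (2⁻¹ : ℝ) ^ k * 2 ^ √(k : ℝ)) atTop (𝓝 0) := by
  have hexp : ∀ k : ℕ, (2⁻¹ : ℝ) ^ k * 2 ^ √(k : ℝ) = 2 ^ (√(k : ℝ) - k) := fun k => by
    rw [Real.rpow_sub two_pos, Real.rpow_natCast, inv_pow, inv_mul_eq_div]
  simp only [hexp]
  exact (tendsto_rpow_atBot_of_base_gt_one 2 one_lt_two).comp
    (tendsto_sqrt_sub_self_atBot.comp tendsto_natCast_atTop_atTop)

section GaussianL2

variable {Ω : Type*} [MeasurableSpace Ω] {P : Measure Ω}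

lemma memLp_two_of_map_eq_gaussianReal {f : Ω → ℝ} (hf : AEMeasurable f P) {μ : ℝ} {v : ℝ≥0}
    (h : P.map f = gaussianReal μ v) : MemLp f 2 P := by
  have := (h ▸ memLp_id_gaussianReal 2 : MemLp id 2 (P.map f)).comp_of_map hf
  simpa using this

lemma integral_sq_sum_of_orthogonal {ι : Type*} (t : Finset ι) (f : ι → Ω → ℝ)
    (hf : ∀ i ∈ t, MemLp (f i) 2 P) (σ : ι → ℝ)
    (horth : ∀ i ∈ t, ∀ j ∈ t, ∫ ω, f i ω * f j ω ∂P = if i = j then σ i else 0) (c : ι → ℝ) :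
    ∫ ω, (∑ i ∈ t, c i * f i ω) ^ 2 ∂P = ∑ i ∈ t, c i ^ 2 * σ i := by
  have hint : ∀ i ∈ t, ∀ j ∈ t, Integrable (fun ω => c i * c j * (f i ω * f j ω)) P :=
    fun i hi j hj => ((hf i hi).integrable_mul (hf j hj)).const_mul _
  calc ∫ ω, (∑ i ∈ t, c i * f i ω) ^ 2 ∂P
      = ∫ ω, ∑ i ∈ t, ∑ j ∈ t, c i * c j * (f i ω * f j ω) ∂P := by
        congr 1 with ω
        rw [sq, sum_mul_sum]
        exact sum_congr rfl fun i _ => sum_congr rfl fun j _ => by ring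
    _ = ∑ i ∈ t, ∑ j ∈ t, c i * c j * ∫ ω, f i ω * f j ω ∂P := by
        rw [integral_finsetSum t fun i hi => integrable_finsetSum t (hint i hi)]
        refine sum_congr rfl fun i hi => ?_
        rw [integral_finsetSum t (hint i hi)]
        exact sum_congr rfl fun j _ => integral_const_mul _ _
    _ = ∑ i ∈ t, c i ^ 2 * σ i := by
        refine sum_congr rfl fun i hi => ?_
        rw [sum_congr rfl fun j hj => by rw [horth i hi j hj], sum_eq_single_of_mem i hi
          fun j _ hji => by rw [if_neg hji.symm, mul_zero], if_pos rfl, sq]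

end GaussianL2

lemma mem_corners {k : ℕ} {v z : ℤ × ℤ} :
    v ∈ corners k z ↔
      z.1 - (2 ^ k - 1) ≤ v.1 ∧ v.1 ≤ z.1 ∧ z.2 - (2 ^ k - 1) ≤ v.2 ∧ v.2 ≤ z.2 := by
  simp only [corners, mem_Icc, Prod.le_def, Prod.fst_sub, Prod.snd_sub]
  tauto

lemma card_corners_inter (k : ℕ) (x z : ℤ × ℤ) :
    #(corners k x ∩ corners k z) = (2 ^ k - (x.1 - z.1).natAbs) * (2 ^ k - (x.2 - z.2).natAbs) := by
  have hinter : corners k x ∩ corners k z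
      = Icc ((x - (2 ^ k - 1, 2 ^ k - 1)) ⊔ (z - (2 ^ k - 1, 2 ^ k - 1))) (x ⊓ z) := by
    ext v
    simp only [mem_inter, corners, mem_Icc, sup_le_iff, le_inf_iff]
    tauto
  rw [hinter, card_Icc_prod, Int.card_Icc, Int.card_Icc]
  simp only [Prod.fst_sup, Prod.snd_sup, Prod.fst_inf, Prod.snd_inf, Prod.fst_sub, Prod.snd_sub]
  have : (1 : ℤ) ≤ 2 ^ k := one_le_pow₀ (by norm_num)
  have hc : ((2 ^ k : ℕ) : ℤ) = 2 ^ k := by push_cast; rfl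
  congr 1 <;> omega

lemma card_corners (k : ℕ) (z : ℤ × ℤ) : #(corners k z) = 2 ^ k * 2 ^ k := by
  simpa using card_corners_inter k z z

lemma modN_mem_V {N : ℕ} (hN : 0 < N) (v : ℤ × ℤ) : modN N v ∈ V N := by
  have hN' : (0 : ℤ) < N := by exact_mod_cast hN
  simp only [V, modN, mem_product, mem_Icc]
  have := Int.emod_lt_of_pos v.1 hN'
  have := Int.emod_lt_of_pos v.2 hN'
  have := Int.emod_nonneg v.1 hN'.ne'
  have := Int.emod_nonneg v.2 hN'.ne'
  omega

lemma injOn_modN_corners {N k : ℕ} (h : 2 ^ k ≤ N) (z : ℤ × ℤ) :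
    Set.InjOn (modN N) (corners k z) := by
  intro v hv w hw hvw
  rw [mem_coe, mem_corners] at hv hw
  have hk : (2 : ℤ) ^ k ≤ N := by exact_mod_cast h
  have h1 := Int.ModEq.dvd (congrArg Prod.fst hvw).symm
  have h2 := Int.ModEq.dvd (congrArg Prod.snd hvw).symm
  have e1 := Int.eq_zero_of_abs_lt_dvd h1 (by rw [abs_lt]; omega)
  have e2 := Int.eq_zero_of_abs_lt_dvd h2 (by rw [abs_lt]; omega)
  exact Prod.ext (by omega) (by omega)

/-- The squares of `B_k^N` containing `z` (the paper's `B_k(z)` reduced mod `N`), by lower-left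
corner. -/
def torusCorners (N k : ℕ) (z : ℤ × ℤ) : Finset (ℤ × ℤ) :=
  (corners k z).image (modN N)

lemma torusCorners_subset_V {N : ℕ} (hN : 0 < N) (k : ℕ) (z : ℤ × ℤ) :
    torusCorners N k z ⊆ V N :=
  image_subset_iff.mpr fun v _ => modN_mem_V hN v

lemma card_torusCorners {N k : ℕ} (h : 2 ^ k ≤ N) (z : ℤ × ℤ) :
    #(torusCorners N k z) = 2 ^ k * 2 ^ k := by
  rw [torusCorners, card_image_of_injOn (injOn_modN_corners h z), card_corners]

lemma torusCorners_subset_of_simRel {N : ℕ} (k : ℕ) {y z : ℤ × ℤ} (h : simRel N z y) :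
    torusCorners N k z ⊆ torusCorners N k y := by
  simp only [torusCorners, image_subset_iff, mem_image]
  intro v hv
  refine ⟨v - (z - y), ?_, ?_⟩
  · rw [mem_corners] at hv ⊢
    simp only [Prod.fst_sub, Prod.snd_sub]
    omega
  · obtain ⟨⟨t1, ht1⟩, ⟨t2, ht2⟩⟩ := h
    simp only [modN, Prod.fst_sub, Prod.snd_sub, Prod.mk.injEq]
    constructor
    · rw [ht1, Int.sub_mul_emod_self_left]
    · rw [ht2, Int.sub_mul_emod_self_left]

lemma torusCorners_congr {N : ℕ} (k : ℕ) {y z : ℤ × ℤ} (h : simRel N z y) :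
    torusCorners N k z = torusCorners N k y :=
  (torusCorners_subset_of_simRel k h).antisymm
    (torusCorners_subset_of_simRel k ⟨dvd_sub_comm.mp h.1, dvd_sub_comm.mp h.2⟩)

lemma card_corners_inter_le_card_torusCorners_inter {N k : ℕ} (h : 2 ^ k ≤ N) (x z : ℤ × ℤ) :
    #(corners k x ∩ corners k z) ≤ #(torusCorners N k x ∩ torusCorners N k z) := by
  rw [← card_image_of_injOn ((injOn_modN_corners h x).mono (by simp))]
  exact card_le_card (image_inter_subset _ _ _)

lemma card_symmDiff_torusCorners_le {N k : ℕ} (h : 2 ^ k ≤ N) {x y z : ℤ × ℤ}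
    (hz : simRel N z y) :
    #(torusCorners N k x ∆ torusCorners N k y)
      ≤ 2 * 2 ^ k * ((x.1 - z.1).natAbs + (x.2 - z.2).natAbs) := by
  rw [← torusCorners_congr k hz]
  have hsum := card_symmDiff_add_two_mul_card_inter (torusCorners N k x) (torusCorners N k z)
  have hinter := (card_corners_inter k x z).symm.trans_le
    (card_corners_inter_le_card_torusCorners_inter h x z)
  rw [card_torusCorners h, card_torusCorners h] at hsum
  nlinarith [Nat.mul_self_le_mul_add_add_tsub_mul_tsub (2 ^ k) (x.1 - z.1).natAbs
    (x.2 - z.2).natAbs]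


lemma natAbs_fst_le_euclNorm (v : ℤ × ℤ) : (v.1.natAbs : ℝ) ≤ euclNorm v := by
  rw [Nat.cast_natAbs, Int.cast_abs]
  exact Real.abs_le_sqrt (le_add_of_nonneg_right (sq_nonneg _))

lemma natAbs_snd_le_euclNorm (v : ℤ × ℤ) : (v.2.natAbs : ℝ) ≤ euclNorm v := by
  rw [Nat.cast_natAbs, Int.cast_abs]
  exact Real.abs_le_sqrt (le_add_of_nonneg_left (sq_nonneg _))

section MBRW

variable {Ω : Type} {N n : ℕ} {b : ℕ → ℤ × ℤ → Ω → ℝ}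

lemma mbrwSum_eq_sum_torusCorners (lo : ℕ) {hi : ℕ} (hhi : 2 ^ hi ≤ N) (z : ℤ × ℤ) (ω : Ω) :
    mbrwSum N lo hi b z ω = ∑ k ∈ Icc lo hi, ∑ w ∈ torusCorners N k z, b k w ω := by
  refine sum_congr rfl fun k hk => (sum_image (f := fun w => b k w ω) fun v hv w hw hvw => ?_).symm
  have hk : 2 ^ k ≤ N := (Nat.pow_le_pow_right two_pos (mem_Icc.mp hk).2).trans hhi
  exact injOn_modN_corners hk z hv hw hvw

lemma mbrwSum_sub_mbrwSum (hn : 2 ^ n ≤ N) (k₀ : ℕ) (x y : ℤ × ℤ) (ω : Ω) :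
    mbrwSum N k₀ n b x ω - mbrwSum N k₀ n b y ω
      = ∑ p ∈ Icc k₀ n ×ˢ V N, ((if p.2 ∈ torusCorners N p.1 x then 1 else 0)
          - (if p.2 ∈ torusCorners N p.1 y then 1 else 0)) * b p.1 p.2 ω := by
  have hN : 0 < N := (Nat.two_pow_pos n).trans_le hn
  simp only [mbrwSum_eq_sum_torusCorners k₀ hn, sum_product, sub_mul, ite_mul, one_mul,
    zero_mul, sum_sub_distrib, sum_ite_mem,
    inter_eq_right.mpr (torusCorners_subset_V hN _ _)]

variable [MeasurableSpace Ω] {P : Measure Ω}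

lemma IsMBRWBase.memLp (hb : IsMBRWBase P N n b) {k : ℕ} {w : ℤ × ℤ} (hk : k ≤ n)
    (hw : w ∈ V N) : MemLp (b k w) 2 P := by
  obtain ⟨v, hv⟩ := hb.2.1 {(k, w)} (by simp [hk, hw]) fun _ => 1
  simp only [sum_singleton, one_mul] at hv
  exact memLp_two_of_map_eq_gaussianReal (hb.1 k hk w hw).aemeasurable hv

theorem integral_sq_mbrwSum_sub (hb : IsMBRWBase P N n b) (hn : 2 ^ n ≤ N) (k₀ : ℕ)
    (x y : ℤ × ℤ) :
    ∫ ω, (mbrwSum N k₀ n b x ω - mbrwSum N k₀ n b y ω) ^ 2 ∂P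
      = ∑ k ∈ Icc k₀ n, #(torusCorners N k x ∆ torusCorners N k y) * ((2 : ℝ) ^ (2 * k))⁻¹ := by
  have hN : 0 < N := (Nat.two_pow_pos n).trans_le hn
  have hmem : ∀ p ∈ Icc k₀ n ×ˢ V N, p.1 ≤ n ∧ p.2 ∈ V N := fun p hp =>
    ⟨(mem_Icc.mp (mem_product.mp hp).1).2, (mem_product.mp hp).2⟩
  simp_rw [mbrwSum_sub_mbrwSum hn]
  rw [integral_sq_sum_of_orthogonal _ (fun p ω => b p.1 p.2 ω)
    (fun p hp => hb.memLp (hmem p hp).1 (hmem p hp).2) (fun p => ((2 : ℝ) ^ (2 * p.1))⁻¹)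
    (fun p hp q hq => by
      rw [hb.2.2 _ _ _ _ (hmem p hp).1 (hmem q hq).1 (hmem p hp).2 (hmem q hq).2]
      simp only [Prod.ext_iff]), sum_product]
  refine sum_congr rfl fun k _ => ?_
  dsimp only
  rw [← sum_mul, sum_sq_ite_mem_sub_ite_mem (torusCorners_subset_V hN _ _)
    (torusCorners_subset_V hN _ _)]

theorem integral_sq_mbrwSum_sub_antitone (hb : IsMBRWBase P N n b) (hn : 2 ^ n ≤ N)
    (x y : ℤ × ℤ) :
    Antitone fun k₀ => ∫ ω, (mbrwSum N k₀ n b x ω - mbrwSum N k₀ n b y ω) ^ 2 ∂P := by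
  intro k₀ k₀' h
  simp only [integral_sq_mbrwSum_sub hb hn]
  exact sum_le_sum_of_subset_of_nonneg (Icc_subset_Icc_left h) fun _ _ _ => by positivity

theorem integral_sq_mbrwSum_sub_le (hb : IsMBRWBase P N n b) (hn : 2 ^ n ≤ N) (k₀ : ℕ)
    {x y z : ℤ × ℤ} (hz : simRel N z y) :
    ∫ ω, (mbrwSum N k₀ n b x ω - mbrwSum N k₀ n b y ω) ^ 2 ∂P
      ≤ 4 * ((x.1 - z.1).natAbs + (x.2 - z.2).natAbs) * 2⁻¹ ^ k₀ := by
  set m : ℕ := (x.1 - z.1).natAbs + (x.2 - z.2).natAbs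
  rw [integral_sq_mbrwSum_sub hb hn]
  calc ∑ k ∈ Icc k₀ n, #(torusCorners N k x ∆ torusCorners N k y) * ((2 : ℝ) ^ (2 * k))⁻¹
      ≤ ∑ k ∈ Icc k₀ n, 2 * m * (2⁻¹ : ℝ) ^ k := by
        refine sum_le_sum fun k hk => ?_
        have hk : 2 ^ k ≤ N := (Nat.pow_le_pow_right two_pos (mem_Icc.mp hk).2).trans hn
        have hcard : (#(torusCorners N k x ∆ torusCorners N k y) : ℝ) ≤ 2 * 2 ^ k * m := by
          exact_mod_cast card_symmDiff_torusCorners_le hk hz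
        calc (#(torusCorners N k x ∆ torusCorners N k y) : ℝ) * ((2 : ℝ) ^ (2 * k))⁻¹
            ≤ 2 * 2 ^ k * m * ((2 : ℝ) ^ (2 * k))⁻¹ := by gcongr
          _ = 2 * m * (2⁻¹ : ℝ) ^ k := by
            rw [pow_mul', inv_pow]
            field_simp
    _ = 2 * m * ∑ k ∈ Icc k₀ n, (2⁻¹ : ℝ) ^ k := by rw [mul_sum]
    _ ≤ 2 * m * (2 * 2⁻¹ ^ k₀) := by gcongr; exact sum_Icc_inv_two_pow_le k₀ n
    _ = 4 * ((x.1 - z.1).natAbs + (x.2 - z.2).natAbs) * 2⁻¹ ^ k₀ := by push_cast [m]; ring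

theorem integral_sq_mbrwSum_sub_le_dN (hb : IsMBRWBase P N n b) (hn : 2 ^ n ≤ N) (k₀ : ℕ)
    (x y : ℤ × ℤ) :
    ∫ ω, (mbrwSum N k₀ n b x ω - mbrwSum N k₀ n b y ω) ^ 2 ∂P ≤ 8 * 2⁻¹ ^ k₀ * dN N x y := by
  have hpos : (0 : ℝ) < 8 * 2⁻¹ ^ k₀ := by positivity
  rw [← div_le_iff₀' hpos]
  refine le_csInf ⟨_, y, ⟨by simp, by simp⟩, rfl⟩ ?_
  rintro _ ⟨z, hz, rfl⟩
  rw [div_le_iff₀' hpos]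
  calc ∫ ω, (mbrwSum N k₀ n b x ω - mbrwSum N k₀ n b y ω) ^ 2 ∂P
      ≤ 4 * ((x.1 - z.1).natAbs + (x.2 - z.2).natAbs) * 2⁻¹ ^ k₀ :=
        integral_sq_mbrwSum_sub_le hb hn k₀ hz
    _ ≤ 4 * (euclNorm (x - z) + euclNorm (x - z)) * 2⁻¹ ^ k₀ := by
        gcongr
        exacts [natAbs_fst_le_euclNorm (x - z), natAbs_snd_le_euclNorm (x - z)]
    _ = 8 * 2⁻¹ ^ k₀ * euclNorm (x - z) := by ring

end MBRW

theorem rho_monotone_and_small_general {Ω : Type} [MeasurableSpace Ω]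
    (P : Measure Ω) (b : ℕ → ℕ → ℤ × ℤ → Ω → ℝ)
    (hb : ∀ n : ℕ, IsMBRWBase P (2 ^ n) n (b n)) :
    (∀ n k₀ k₀' : ℕ, k₀ ≤ k₀' → k₀' ≤ n → ∀ x ∈ V (2 ^ n), ∀ y ∈ V (2 ^ n),
        ∫ ω, (mbrwSum (2 ^ n) k₀' n (b n) x ω - mbrwSum (2 ^ n) k₀' n (b n) y ω) ^ 2 ∂P
          ≤ ∫ ω,
              (mbrwSum (2 ^ n) k₀ n (b n) x ω - mbrwSum (2 ^ n) k₀ n (b n) y ω) ^ 2 ∂P) ∧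
    (∀ ε : ℝ, 0 < ε → ∃ K : ℕ, ∀ k₀ : ℕ, K ≤ k₀ → ∃ M : ℕ, ∀ n : ℕ, M ≤ n → k₀ ≤ n →
        ∀ x ∈ V (2 ^ n), ∀ y ∈ V (2 ^ n),
          dN (2 ^ n) x y ≤ (2 : ℝ) ^ (Real.sqrt k₀) →
          ∫ ω, (mbrwSum (2 ^ n) k₀ n (b n) x ω - mbrwSum (2 ^ n) k₀ n (b n) y ω) ^ 2 ∂P
            ≤ ε) := by
  refine ⟨fun n k₀ k₀' hk _ x _ y _ =>
    integral_sq_mbrwSum_sub_antitone (hb n) le_rfl x y hk, fun ε hε => ?_⟩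
  have hlim := tendsto_inv_two_pow_mul_two_rpow_sqrt.const_mul 8
  rw [mul_zero] at hlim
  obtain ⟨K, hK⟩ := eventually_atTop.mp (hlim.eventually (Iic_mem_nhds hε))
  refine ⟨K, fun k₀ hk₀ => ⟨0, fun n _ _ x _ y _ hd => ?_⟩⟩
  calc ∫ ω, (mbrwSum (2 ^ n) k₀ n (b n) x ω - mbrwSum (2 ^ n) k₀ n (b n) y ω) ^ 2 ∂P
      ≤ 8 * 2⁻¹ ^ k₀ * dN (2 ^ n) x y := integral_sq_mbrwSum_sub_le_dN (hb n) le_rfl k₀ x y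
    _ ≤ 8 * 2⁻¹ ^ k₀ * 2 ^ √(k₀ : ℝ) := by gcongr
    _ ≤ ε := by rw [mul_assoc]; exact hK k₀ hk₀

/-- **Properties of the truncated-MBRW increment variances**
`ρ_{N,k₀}(x,y) = E[(S_x^{N,k₀} - S_y^{N,k₀})²]` (with `S^{N,k₀} = mbrwSum N k₀ n b`):
(i) `ρ_{N,k₀}(x,y)` is nonincreasing in `k₀`, and
(ii) `limsup_{k₀→∞} limsup_{N→∞} sup{ρ_{N,k₀}(x,y) : d^N(x,y) ≤ 2^{√k₀}} = 0`. -/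
theorem rho_monotone_and_small {Ω : Type} [MeasurableSpace Ω]
    (P : Measure Ω) [IsProbabilityMeasure P] (b : ℕ → ℕ → ℤ × ℤ → Ω → ℝ)
    (hb : ∀ n : ℕ, IsMBRWBase P (2 ^ n) n (b n)) :
    (∀ n k₀ k₀' : ℕ, k₀ ≤ k₀' → k₀' ≤ n → ∀ x ∈ V (2 ^ n), ∀ y ∈ V (2 ^ n),
        ∫ ω, (mbrwSum (2 ^ n) k₀' n (b n) x ω - mbrwSum (2 ^ n) k₀' n (b n) y ω) ^ 2 ∂P
          ≤ ∫ ω,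
              (mbrwSum (2 ^ n) k₀ n (b n) x ω - mbrwSum (2 ^ n) k₀ n (b n) y ω) ^ 2 ∂P) ∧
    (∀ ε : ℝ, 0 < ε → ∃ K : ℕ, ∀ k₀ : ℕ, K ≤ k₀ → ∃ M : ℕ, ∀ n : ℕ, M ≤ n → k₀ ≤ n →
        ∀ x ∈ V (2 ^ n), ∀ y ∈ V (2 ^ n),
          dN (2 ^ n) x y ≤ (2 : ℝ) ^ (Real.sqrt k₀) →
          ∫ ω, (mbrwSum (2 ^ n) k₀ n (b n) x ω - mbrwSum (2 ^ n) k₀ n (b n) y ω) ^ 2 ∂P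
            ≤ ε) :=
  rho_monotone_and_small_general P b hb

end
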